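/- arXiv:1703.08315 — 3 statements merged into one kernel-verified Lean document; each statement's English description precedes it below -/
import Mathlib

section
/- With q_p = 1 − p/X for primes p ≤ X, the quantity −log(∏_{p ≤ X} (p−1)/(p − q_p)) = −∑_{p ≤ X} log(1 − p/(p + (p−1)X)) is O(1/log X) as X → ∞; in particular ∏_{p ≤ X} (p−1)/(p − q_p) = 1 + O(1/log X). -/
/-!
Writing the factor `(p - 1)/(p - q_p)` as `1 - p/(p + (p - 1)X)`, one has
`-log(1 - p/(p + (p - 1)X)) ≤ p/((p - 1)X) ≤ 2/X`, so `-log ∏_{p ≤ X}` is at most `2π(X)/X`,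
which is `O(1/log X)` by Chebyshev's bound. Since the product lies in `(0, 1]`, its distance to
`1` is at most its negative logarithm.
-/

open Finset Filter Asymptotics

/-- The finset of primes `≤ X`. -/
noncomputable def primesUpTo (X : ℝ) : Finset ℕ :=
  (Finset.range (⌊X⌋₊ + 1)).filter Nat.Prime

open Real

lemma primesUpTo_eq_primesLE (X : ℝ) : primesUpTo X = Nat.primesLE ⌊X⌋₊ := rfl

lemma primeCounting_floor_div_isBigO :
    (fun X : ℝ => (Nat.primeCounting ⌊X⌋₊ : ℝ) / X) =O[atTop] fun X => 1 / log X := by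
  refine IsBigO.of_bound (log 4 + 1) ?_
  filter_upwards [Chebyshev.eventually_primeCounting_le one_pos, eventually_gt_atTop 1]
    with X hπ hX
  have hlog : 0 < log X := log_pos hX
  rw [norm_of_nonneg (by positivity), norm_of_nonneg (by positivity), div_le_iff₀ (by linarith)]
  calc (Nat.primeCounting ⌊X⌋₊ : ℝ) ≤ (log 4 + 1) * X / log X := hπ
    _ = (log 4 + 1) * (1 / log X) * X := by ring

/-- The factor `(p - 1)/(p - q_p)`, `q_p = 1 - p/X`, cleared of nested fractions. -/
noncomputable def localFactor (X p : ℝ) : ℝ := 1 - p / (p + (p - 1) * X)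

section localFactor

variable {X p : ℝ}

lemma localFactor_eq_div (hp : 1 ≤ p) (hX : 0 ≤ X) :
    localFactor X p = (p - 1) * X / (p + (p - 1) * X) := by
  have hD : p + (p - 1) * X ≠ 0 := by nlinarith
  rw [localFactor]
  field_simp
  ring

lemma sub_one_div_eq_localFactor (hp : 1 ≤ p) (hX : 0 < X) :
    (p - 1) / (p - (1 - p / X)) = localFactor X p := by
  have hden : p - (1 - p / X) = (p + (p - 1) * X) / X := by
    field_simp
    ring
  rw [localFactor_eq_div hp hX.le, hden, div_div_eq_mul_div]

lemma localFactor_pos (hp : 1 < p) (hX : 0 < X) : 0 < localFactor X p := by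
  rw [localFactor_eq_div hp.le hX.le]
  have : 0 < (p - 1) * X := mul_pos (by linarith) hX
  positivity

lemma localFactor_le_one (hp : 1 ≤ p) (hX : 0 ≤ X) : localFactor X p ≤ 1 := by
  have : 0 ≤ p / (p + (p - 1) * X) := div_nonneg (by linarith) (by nlinarith)
  rw [localFactor]
  linarith

lemma neg_log_localFactor_le (hp : 2 ≤ p) (hX : 0 < X) : -log (localFactor X p) ≤ 2 / X := by
  have hB : 0 < (p - 1) * X := mul_pos (by linarith) hX
  have hinv : (localFactor X p)⁻¹ - 1 = p / ((p - 1) * X) := by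
    rw [localFactor_eq_div (by linarith) hX.le, inv_div, div_sub_one hB.ne']
    ring
  calc -log (localFactor X p) ≤ (localFactor X p)⁻¹ - 1 := by
        linarith [one_sub_inv_le_log_of_pos (localFactor_pos (by linarith : 1 < p) hX)]
    _ = p / ((p - 1) * X) := hinv
    _ ≤ 2 / X := by
        rw [div_le_div_iff₀ hB hX]
        nlinarith

end localFactor

noncomputable def secondProd (X : ℝ) : ℝ :=
  ∏ p ∈ primesUpTo X, (((p : ℝ) - 1) / ((p : ℝ) - (1 - (p : ℝ) / X)))

section secondProd

variable {X : ℝ}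

lemma two_le_of_mem_primesUpTo {p : ℕ} (hp : p ∈ primesUpTo X) : (2 : ℝ) ≤ p := by
  exact_mod_cast Nat.two_le_of_mem_primesLE hp

lemma one_lt_of_mem_primesUpTo {p : ℕ} (hp : p ∈ primesUpTo X) : (1 : ℝ) < p := by
  exact_mod_cast Nat.one_lt_of_mem_primesLE hp

lemma secondProd_eq_prod_localFactor (hX : 0 < X) :
    secondProd X = ∏ p ∈ primesUpTo X, localFactor X p :=
  prod_congr rfl fun _ hp =>
    sub_one_div_eq_localFactor (one_lt_of_mem_primesUpTo hp).le hX

lemma secondProd_pos (hX : 0 < X) : 0 < secondProd X := by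
  rw [secondProd_eq_prod_localFactor hX]
  exact prod_pos fun p hp => localFactor_pos (one_lt_of_mem_primesUpTo hp) hX

lemma secondProd_le_one (hX : 0 < X) : secondProd X ≤ 1 := by
  rw [secondProd_eq_prod_localFactor hX]
  exact prod_le_one
    (fun p hp => (localFactor_pos (one_lt_of_mem_primesUpTo hp) hX).le)
    fun p hp => localFactor_le_one (one_lt_of_mem_primesUpTo hp).le hX.le

lemma log_secondProd (hX : 0 < X) :
    log (secondProd X) = ∑ p ∈ primesUpTo X, log (localFactor X p) := by
  rw [secondProd_eq_prod_localFactor hX, log_prod]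
  exact fun p hp => (localFactor_pos (one_lt_of_mem_primesUpTo hp) hX).ne'

lemma neg_log_secondProd_le (hX : 0 < X) :
    -log (secondProd X) ≤ 2 * ((Nat.primeCounting ⌊X⌋₊ : ℝ) / X) := by
  rw [log_secondProd hX, ← sum_neg_distrib]
  calc ∑ p ∈ primesUpTo X, -log (localFactor X p) ≤ ∑ _p ∈ primesUpTo X, 2 / X :=
        sum_le_sum fun p hp => neg_log_localFactor_le (two_le_of_mem_primesUpTo hp) hX
    _ = 2 * ((Nat.primeCounting ⌊X⌋₊ : ℝ) / X) := by
        rw [sum_const, nsmul_eq_mul, primesUpTo_eq_primesLE,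
          Nat.primesLE_card_eq_primeCounting]
        ring

lemma neg_log_secondProd_isBigO :
    (fun X => -log (secondProd X)) =O[atTop] fun X => 1 / log X := by
  refine IsBigO.trans ?_ primeCounting_floor_div_isBigO
  refine IsBigO.of_bound 2 ?_
  filter_upwards [eventually_gt_atTop 0] with X hX
  have hnonneg : 0 ≤ -log (secondProd X) :=
    neg_nonneg.mpr (log_nonpos (secondProd_pos hX).le (secondProd_le_one hX))
  rw [norm_of_nonneg hnonneg, norm_of_nonneg (by positivity)]
  exact neg_log_secondProd_le hX

lemma secondProd_sub_one_isBigO :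
    (fun X => secondProd X - 1) =O[atTop] fun X => 1 / log X := by
  refine IsBigO.trans ?_ neg_log_secondProd_isBigO
  refine IsBigO.of_bound' ?_
  filter_upwards [eventually_gt_atTop 0] with X hX
  have hle := secondProd_le_one hX
  have hlog := log_le_sub_one_of_pos (secondProd_pos hX)
  rw [norm_of_nonpos (by linarith), norm_of_nonneg (by linarith)]
  linarith

end secondProd

/-- With `q_p = 1 − p/X`, the quantity
`−log ∏_{p ≤ X} (p−1)/(p − q_p) = −∑_{p ≤ X} log(1 − p/(p + (p−1)X))`
is `O(1/log X)` as `X → ∞`; in particular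
`∏_{p ≤ X} (p−1)/(p − q_p) = 1 + O(1/log X)`. -/
theorem second_prod_close_to_one :
    (∀ X : ℝ, 2 ≤ X →
      -Real.log (∏ p ∈ primesUpTo X, (((p : ℝ) - 1) / ((p : ℝ) - (1 - (p : ℝ)/X))))
        = -∑ p ∈ primesUpTo X, Real.log (1 - (p : ℝ) / ((p : ℝ) + ((p : ℝ) - 1) * X))) ∧
    (fun X : ℝ =>
        -Real.log (∏ p ∈ primesUpTo X, (((p : ℝ) - 1) / ((p : ℝ) - (1 - (p : ℝ)/X)))))
      =O[atTop] (fun X : ℝ => 1 / Real.log X) ∧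
    (fun X : ℝ =>
        (∏ p ∈ primesUpTo X, (((p : ℝ) - 1) / ((p : ℝ) - (1 - (p : ℝ)/X)))) - 1)
      =O[atTop] (fun X : ℝ => 1 / Real.log X) :=
  ⟨fun X hX => congrArg Neg.neg (log_secondProd (by linarith)), neg_log_secondProd_isBigO,
    secondProd_sub_one_isBigO⟩
end

section
/- Self-similarity step: let (q_n) be nonnegative, completely multiplicative, with ∑ q_n < ∞, and let Φ(t) = e^{−t²}, c > 0, and k ≥ 1 an integer. Then ∑_{m,n ≥ 1} ∫_{−∞}^{∞} k^{−it} q_m q_n (m/n)^{it} Φ(ct) dt ≥ q_k · ∑_{r,n ≥ 1} ∫_{−∞}^{∞} q_r q_n (r/n)^{it} Φ(ct) dt. -/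
/-!
Each integral is the Fourier transform of the Gaussian `t ↦ e^{-(ct)²}` at `log m - log n`
(shifted by `log k` on the right), a nonnegative real number. Since `q_k q_r = q_{kr}` and
`log (kr) - log k = log r`, the left side is the subseries of the right side over `m ∈ kℕ`,
and dropping the remaining nonnegative terms gives the inequality.
-/

open MeasureTheory Complex

noncomputable def gaussianHat (c a : ℝ) : ℝ :=
  √(Real.pi / c ^ 2) * Real.exp (-a ^ 2 / (4 * c ^ 2))

section gaussianHat

variable (c a : ℝ)

lemma gaussianHat_nonneg : 0 ≤ gaussianHat c a := by
  unfold gaussianHat; positivity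

lemma gaussianHat_le : gaussianHat c a ≤ √(Real.pi / c ^ 2) := by
  refine mul_le_of_le_one_right (Real.sqrt_nonneg _) (Real.exp_le_one_iff.2 ?_)
  exact div_nonpos_of_nonpos_of_nonneg (neg_nonpos.2 (sq_nonneg a)) (by positivity)

end gaussianHat

section integral

variable {c : ℝ} (hc : c ≠ 0)
include hc

lemma integral_cexp_mul_gaussian (a : ℝ) :
    ∫ t : ℝ, cexp (I * t * a) * Real.exp (-(c * t) ^ 2) = gaussianHat c a := by
  have hc2 : 0 < ((c : ℂ) ^ 2).re := by
    rw [← ofReal_pow, ofReal_re]; positivity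
  have hsqrt : ((Real.pi : ℂ) / (c : ℂ) ^ 2) ^ (1 / 2 : ℂ) = (√(Real.pi / c ^ 2) : ℝ) := by
    rw [Real.sqrt_eq_rpow, ofReal_cpow (by positivity)]
    norm_num
  have hintegrand (t : ℝ) : cexp (I * t * a) * Real.exp (-(c * t) ^ 2)
      = cexp (I * a * t) * cexp (-(c : ℂ) ^ 2 * t ^ 2) := by
    rw [ofReal_exp]; push_cast; ring_nf
  rw [integral_congr_ae (.of_forall hintegrand), fourierIntegral_gaussian hc2, hsqrt, gaussianHat]
  push_cast
  ring_nf

lemma integral_ofReal_mul_cexp_mul_gaussian (A a b : ℝ) :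
    ∫ t : ℝ, (A : ℂ) * cexp (I * t * (a - b)) * Real.exp (-(c * t) ^ 2)
      = (A * gaussianHat c (a - b) : ℝ) := by
  have hintegrand (t : ℝ) : (A : ℂ) * cexp (I * t * (a - b)) * Real.exp (-(c * t) ^ 2)
      = A * (cexp (I * t * (a - b : ℝ)) * Real.exp (-(c * t) ^ 2)) := by
    push_cast; ring
  simp_rw [hintegrand, integral_const_mul, integral_cexp_mul_gaussian hc, ofReal_mul]

lemma integral_cexp_mul_ofReal_mul_cexp_mul_gaussian (A a b d : ℝ) :
    ∫ t : ℝ, cexp (-(I * t) * d) * A * cexp (I * t * (a - b)) * Real.exp (-(c * t) ^ 2)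
      = (A * gaussianHat c (a - (b + d)) : ℝ) := by
  have hintegrand (t : ℝ) :
      cexp (-(I * t) * d) * A * cexp (I * t * (a - b)) * Real.exp (-(c * t) ^ 2)
        = A * (cexp (I * t * (a - (b + d) : ℝ)) * Real.exp (-(c * t) ^ 2)) := by
    rw [mul_right_comm _ (A : ℂ), ← Complex.exp_add]; push_cast; ring_nf
  simp_rw [hintegrand, integral_const_mul, integral_cexp_mul_gaussian hc, ofReal_mul]

end integral

lemma summable_tsum_mul_mul_of_le {ι κ : Type*} {f : ι → ℝ} {g : κ → ℝ} {W : ι → κ → ℝ} {B : ℝ}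
    (hf : ∀ i, 0 ≤ f i) (hg : ∀ j, 0 ≤ g j) (hfs : Summable f) (hgs : Summable g)
    (hW : ∀ i j, 0 ≤ W i j) (hWB : ∀ i j, W i j ≤ B) :
    Summable fun i => ∑' j, f i * g j * W i j := by
  have hle (i : ι) (j : κ) : f i * g j * W i j ≤ f i * B * g j := by
    have := hf i; have := hg j
    calc f i * g j * W i j ≤ f i * g j * B := by gcongr; exact hWB i j
      _ = f i * B * g j := by ring
  have hnonneg (i : ι) (j : κ) : 0 ≤ f i * g j * W i j := by
    have := hf i; have := hg j; have := hW i j; positivity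
  refine .of_nonneg_of_le (fun i => tsum_nonneg (hnonneg i)) (fun i => ?_)
    (hfs.mul_left (B * ∑' j, g j))
  calc ∑' j, f i * g j * W i j ≤ ∑' j, f i * B * g j :=
        (Summable.of_nonneg_of_le (hnonneg i) (hle i) (hgs.mul_left _)).tsum_le_tsum (hle i)
          (hgs.mul_left _)
    _ = B * (∑' j, g j) * f i := by rw [tsum_mul_left]; ring

lemma mul_tsum_tsum_le_tsum_tsum {q : ℕ → ℝ} {W : ℕ → ℕ → ℝ} {B : ℝ} (hq : ∀ n, 0 ≤ q n)
    (hmul : ∀ m n, q (m * n) = q m * q n) (hsum : Summable q) (hW : ∀ m n, 0 ≤ W m n)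
    (hWB : ∀ m n, W m n ≤ B) {k : ℕ} (hk : k ≠ 0) :
    q k * ∑' r, ∑' n, q r * q n * W (k * r) n ≤ ∑' m, ∑' n, q m * q n * W m n := by
  have hinj : Function.Injective (k * ·) := fun _ _ => Nat.eq_of_mul_eq_mul_left (by omega)
  calc q k * ∑' r, ∑' n, q r * q n * W (k * r) n
      = ∑' r, ∑' n, q (k * r) * q n * W (k * r) n := by
        simp_rw [← tsum_mul_left, hmul, mul_assoc]
    _ ≤ ∑' m, ∑' n, q m * q n * W m n :=
        tsum_comp_le_tsum_of_inj (summable_tsum_mul_mul_of_le hq hq hsum hsum hW hWB)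
          (fun m => tsum_nonneg fun n => by have := hq m; have := hq n; have := hW m n; positivity)
          hinj

theorem self_similarity_step_general (q : ℕ → ℝ)
    (hq : ∀ n, 0 ≤ q n) (hq0 : q 0 = 0)
    (hmul : ∀ m n : ℕ, q (m * n) = q m * q n) (hsum : Summable q)
    (c : ℝ) (hc : 0 < c) (k : ℕ) (hk : 1 ≤ k) :
    q k * (∑' m : ℕ, ∑' n : ℕ, ∫ t : ℝ,
        (q m * q n : ℝ) * Complex.exp (Complex.I * t * (Real.log m - Real.log n))
          * Real.exp (-(c * t)^2)).re
      ≤ (∑' m : ℕ, ∑' n : ℕ, ∫ t : ℝ,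
        Complex.exp (-(Complex.I * t) * Real.log k)
          * (q m * q n : ℝ) * Complex.exp (Complex.I * t * (Real.log m - Real.log n))
          * Real.exp (-(c * t)^2)).re := by
  have hk0 : k ≠ 0 := by omega
  set W : ℕ → ℕ → ℝ := fun m n => gaussianHat c (Real.log m - (Real.log n + Real.log k))
  have hshift (r n : ℕ) :
      q r * q n * gaussianHat c (Real.log r - Real.log n) = q r * q n * W (k * r) n := by
    rcases eq_or_ne r 0 with rfl | hr
    · simp [hq0]
    · simp only [W, Nat.cast_mul, Real.log_mul (Nat.cast_ne_zero.2 hk0) (Nat.cast_ne_zero.2 hr)]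
      ring_nf
  simp_rw [integral_ofReal_mul_cexp_mul_gaussian hc.ne',
    integral_cexp_mul_ofReal_mul_cexp_mul_gaussian hc.ne', ← ofReal_tsum, ofReal_re]
  calc _ = q k * ∑' r, ∑' n, q r * q n * W (k * r) n := by
        congr 1; exact tsum_congr fun r => tsum_congr (hshift r)
    _ ≤ ∑' m, ∑' n, q m * q n * W m n :=
        mul_tsum_tsum_le_tsum_tsum (W := W) hq hmul hsum (fun _ _ => gaussianHat_nonneg _ _)
          (fun _ _ => gaussianHat_le _ _) hk0

/-- Self-similarity step: for nonnegative, completely multiplicative, summable weights `q`,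
`Φ(t) = e^{−t²}`, `c > 0` and an integer `k ≥ 1`,
`∑_{m,n ≥ 1} ∫ k^{−it} q_m q_n (m/n)^{it} Φ(ct) dt
  ≥ q_k · ∑_{r,n ≥ 1} ∫ q_r q_n (r/n)^{it} Φ(ct) dt`. -/
theorem self_similarity_step (q : ℕ → ℝ)
    (hq : ∀ n, 0 ≤ q n) (hq0 : q 0 = 0) (hq1 : q 1 = 1)
    (hmul : ∀ m n : ℕ, q (m * n) = q m * q n) (hsum : Summable q)
    (c : ℝ) (hc : 0 < c) (k : ℕ) (hk : 1 ≤ k) :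
    q k * (∑' m : ℕ, ∑' n : ℕ, ∫ t : ℝ,
        (q m * q n : ℝ) * Complex.exp (Complex.I * t * (Real.log m - Real.log n))
          * Real.exp (-(c * t)^2)).re
      ≤ (∑' m : ℕ, ∑' n : ℕ, ∫ t : ℝ,
        Complex.exp (-(Complex.I * t) * Real.log k)
          * (q m * q n : ℝ) * Complex.exp (Complex.I * t * (Real.log m - Real.log n))
          * Real.exp (-(c * t)^2)).re :=
  self_similarity_step_general q hq hq0 hmul hsum c hc k hk
end

section
/- Let (q_n) be nonnegative completely multiplicative summable weights and (a_k) nonnegative coefficients with ∑ a_k q_k < ∞, Φ(t) = e^{−t²}, c > 0. Define I₁ = ∑_k a_k ∑_{m,n} ∫ k^{−it} q_m q_n (m/n)^{it} Φ(ct) dt and I₂ = ∑_{m,n} ∫ q_m q_n (m/n)^{it} Φ(ct) dt. Then I₁/I₂ ≥ ∑_{k=1}^∞ a_k q_k (with I₂ > 0). -/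
/-!
Against the Gaussian `Φ(ct)`, each integral `∫ q_m q_n (m/n)^{it} k^{-it} Φ(ct) dt` equals
`q_m q_n Φ̂(log m - log n - log k)` with `Φ̂ > 0`, so `I₁` and `I₂` are sums of nonnegative terms.
Complete multiplicativity makes the shift by `log k` self-similar: replacing `m` by `k m` maps the
terms of `q_k I₂` injectively onto terms of the `k`-th inner sum of `I₁`, which is therefore at
least `q_k I₂`. Finally `I₂ ≥ Φ̂(0) > 0` from the term `m = n = 1`.
-/

open MeasureTheory Real

noncomputable section

def gaussianFourier (c x : ℝ) : ℝ := √(π / c ^ 2) * exp (-(x ^ 2 / (4 * c ^ 2)))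

lemma gaussianFourier_pos {c : ℝ} (hc : c ≠ 0) (x : ℝ) : 0 < gaussianFourier c x := by
  unfold gaussianFourier
  have : 0 < π / c ^ 2 := by positivity
  positivity

lemma gaussianFourier_nonneg (c x : ℝ) : 0 ≤ gaussianFourier c x := by
  unfold gaussianFourier; positivity

lemma gaussianFourier_le (c x : ℝ) : gaussianFourier c x ≤ √(π / c ^ 2) := by
  refine mul_le_of_le_one_right (sqrt_nonneg _) (exp_le_one_iff.mpr ?_)
  have : 0 ≤ x ^ 2 / (4 * c ^ 2) := by positivity
  linarith

lemma integral_exp_mul_gaussian {c : ℝ} (hc : c ≠ 0) (x : ℝ) :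
    ∫ t : ℝ, Complex.exp (Complex.I * t * x) * (exp (-(c * t) ^ 2) : ℂ)
      = (gaussianFourier c x : ℂ) := by
  have hre : 0 < ((c : ℂ) ^ 2).re := by
    rw [← Complex.ofReal_pow, Complex.ofReal_re]; positivity
  calc ∫ t : ℝ, Complex.exp (Complex.I * t * x) * (exp (-(c * t) ^ 2) : ℂ)
      = ∫ t : ℝ, Complex.exp (Complex.I * x * t) * Complex.exp (-(c : ℂ) ^ 2 * (t : ℂ) ^ 2) := by
        congr 1 with t
        push_cast
        ring_nf
    _ = (π / (c : ℂ) ^ 2) ^ (1 / 2 : ℂ) * Complex.exp (-(x : ℂ) ^ 2 / (4 * (c : ℂ) ^ 2)) :=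
        fourierIntegral_gaussian hre x
    _ = (gaussianFourier c x : ℂ) := by
        rw [show (π / (c : ℂ) ^ 2) = ((π / c ^ 2 : ℝ) : ℂ) by push_cast; ring,
          show (1 / 2 : ℂ) = ((1 / 2 : ℝ) : ℂ) by norm_num,
          ← Complex.ofReal_cpow (by positivity), ← sqrt_eq_rpow,
          show -(x : ℂ) ^ 2 / (4 * (c : ℂ) ^ 2) = ((-(x ^ 2 / (4 * c ^ 2)) : ℝ) : ℂ) by
            push_cast; ring]
        push_cast [gaussianFourier]
        rfl

lemma integral_ofReal_mul_exp_mul_gaussian {c : ℝ} (hc : c ≠ 0) (r x : ℝ) :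
    ∫ t : ℝ, (r : ℂ) * Complex.exp (Complex.I * t * x) * (exp (-(c * t) ^ 2) : ℂ)
      = ((r * gaussianFourier c x : ℝ) : ℂ) := by
  simp_rw [mul_assoc (r : ℂ)]
  rw [integral_const_mul, integral_exp_mul_gaussian hc, Complex.ofReal_mul]

lemma integral_exp_neg_mul_ofReal_mul_exp_mul_gaussian {c : ℝ} (hc : c ≠ 0) (L r x : ℝ) :
    ∫ t : ℝ, Complex.exp (-(Complex.I * t) * L) * (r : ℂ)
        * Complex.exp (Complex.I * t * x) * (exp (-(c * t) ^ 2) : ℂ)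
      = ((r * gaussianFourier c (x - L) : ℝ) : ℂ) := by
  rw [← integral_ofReal_mul_exp_mul_gaussian hc]
  congr 1 with t
  rw [Complex.ofReal_sub, mul_sub, Complex.exp_sub, neg_mul, Complex.exp_neg]
  ring

def resonanceSum (q : ℕ → ℝ) (G : ℝ → ℝ) (y : ℝ) : ℝ :=
  ∑' m : ℕ, ∑' n : ℕ, q m * q n * G (log m - log n - y)

section WeightedSums

variable {q : ℕ → ℝ} {G : ℝ → ℝ} {B : ℝ}

lemma mul_mul_le_of_le (hq : ∀ n, 0 ≤ q n) (hGB : ∀ x, G x ≤ B) (m n : ℕ) (x : ℝ) :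
    q m * q n * G x ≤ B * q m * q n := by
  have := mul_le_mul_of_nonneg_left (hGB x) (mul_nonneg (hq m) (hq n))
  linarith

lemma summable_mul_mul (hq : ∀ n, 0 ≤ q n) (hsum : Summable q) (hG : ∀ x, 0 ≤ G x)
    (hGB : ∀ x, G x ≤ B) (m : ℕ) (x : ℕ → ℝ) :
    Summable fun n => q m * q n * G (x n) :=
  Summable.of_nonneg_of_le (fun n => mul_nonneg (mul_nonneg (hq m) (hq n)) (hG _))
    (fun n => mul_mul_le_of_le hq hGB m n _) (hsum.mul_left (B * q m))

lemma tsum_mul_mul_nonneg (hq : ∀ n, 0 ≤ q n) (hG : ∀ x, 0 ≤ G x) (m : ℕ) (x : ℕ → ℝ) :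
    0 ≤ ∑' n, q m * q n * G (x n) :=
  tsum_nonneg fun n => mul_nonneg (mul_nonneg (hq m) (hq n)) (hG _)

lemma tsum_mul_mul_le (hq : ∀ n, 0 ≤ q n) (hsum : Summable q) (hG : ∀ x, 0 ≤ G x)
    (hGB : ∀ x, G x ≤ B) (m : ℕ) (x : ℕ → ℝ) :
    ∑' n, q m * q n * G (x n) ≤ B * (∑' n, q n) * q m := by
  calc ∑' n, q m * q n * G (x n) ≤ ∑' n, B * q m * q n :=
        (summable_mul_mul hq hsum hG hGB m x).tsum_le_tsum (fun n => mul_mul_le_of_le hq hGB m n _)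
          (hsum.mul_left _)
    _ = B * (∑' n, q n) * q m := by rw [tsum_mul_left]; ring

lemma summable_tsum_mul_mul (hq : ∀ n, 0 ≤ q n) (hsum : Summable q) (hG : ∀ x, 0 ≤ G x)
    (hGB : ∀ x, G x ≤ B) (x : ℕ → ℕ → ℝ) :
    Summable fun m => ∑' n, q m * q n * G (x m n) :=
  Summable.of_nonneg_of_le (fun m => tsum_mul_mul_nonneg hq hG m _)
    (fun m => tsum_mul_mul_le hq hsum hG hGB m _) (hsum.mul_left _)

lemma resonanceSum_nonneg (hq : ∀ n, 0 ≤ q n) (hG : ∀ x, 0 ≤ G x) (y : ℝ) :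
    0 ≤ resonanceSum q G y :=
  tsum_nonneg fun m => tsum_mul_mul_nonneg hq hG m _

lemma resonanceSum_zero_pos (hq : ∀ n, 0 ≤ q n) (hq1 : q 1 = 1) (hsum : Summable q)
    (hG : ∀ x, 0 ≤ G x) (hGB : ∀ x, G x ≤ B) (hG0 : 0 < G 0) :
    0 < resonanceSum q G 0 := by
  calc 0 < q 1 * q 1 * G (log (1 : ℕ) - log (1 : ℕ) - 0) := by simpa [hq1] using hG0
    _ ≤ ∑' n, q 1 * q n * G (log (1 : ℕ) - log n - 0) :=
        (summable_mul_mul hq hsum hG hGB 1 fun n => log (1 : ℕ) - log n - 0).le_tsum 1 fun n _ => mul_nonneg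
          (mul_nonneg (hq 1) (hq n)) (hG _)
    _ ≤ resonanceSum q G 0 :=
        (summable_tsum_mul_mul hq hsum hG hGB fun m n => log m - log n - 0).le_tsum 1
          fun m _ => tsum_mul_mul_nonneg hq hG m _

lemma mul_resonanceSum_zero_le (hq : ∀ n, 0 ≤ q n) (hq0 : q 0 = 0)
    (hmul : ∀ m n : ℕ, q (m * n) = q m * q n) (hsum : Summable q) (hG : ∀ x, 0 ≤ G x)
    (hGB : ∀ x, G x ≤ B) (k : ℕ) :
    q k * resonanceSum q G 0 ≤ resonanceSum q G (log k) := by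
  rcases k.eq_zero_or_pos with rfl | hk
  · rw [hq0, zero_mul]
    exact resonanceSum_nonneg hq hG _
  have hrow : ∀ m : ℕ, q k * ∑' n, q m * q n * G (log m - log n - 0)
      = ∑' n, q (k * m) * q n * G (log (k * m : ℕ) - log n - log k) := by
    intro m
    rw [← tsum_mul_left]
    refine tsum_congr fun n => ?_
    rcases m.eq_zero_or_pos with rfl | hm
    · simp [hq0]
    · rw [hmul, Nat.cast_mul, log_mul (by positivity) (by positivity)]
      ring_nf
  have hsummable := summable_tsum_mul_mul hq hsum hG hGB fun m n => log m - log n - log k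
  calc q k * resonanceSum q G 0 = ∑' m, q k * ∑' n, q m * q n * G (log m - log n - 0) :=
        tsum_mul_left.symm
    _ = ∑' m, ∑' n, q (k * m) * q n * G (log (k * m : ℕ) - log n - log k) := tsum_congr hrow
    _ ≤ resonanceSum q G (log k) :=
        (hsummable.comp_injective (mul_right_injective₀ hk.ne')).tsum_le_tsum_of_inj _
          (mul_right_injective₀ hk.ne') (fun m _ => tsum_mul_mul_nonneg hq hG m _)
          (fun _ => le_rfl) hsummable

end WeightedSums

lemma re_tsum_tsum_ofReal {α β : Type*} (f : α → β → ℝ) :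
    (∑' a, ∑' b, (f a b : ℂ)).re = ∑' a, ∑' b, f a b := by
  simp_rw [← Complex.ofReal_tsum, Complex.ofReal_re]

end

theorem resonance_ratio_lower_bound_general (q a : ℕ → ℝ)
    (hq : ∀ n, 0 ≤ q n) (hq0 : q 0 = 0) (hq1 : q 1 = 1)
    (hmul : ∀ m n : ℕ, q (m * n) = q m * q n) (hsum : Summable q)
    (ha : ∀ k, 0 ≤ a k) (haq : Summable (fun k => a k * q k))
    (c : ℝ) (hc : 0 < c)
    (hI1 : Summable (fun k : ℕ => a k * (∑' m : ℕ, ∑' n : ℕ, ∫ t : ℝ,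
        Complex.exp (-(Complex.I * t) * Real.log k)
          * (q m * q n : ℝ) * Complex.exp (Complex.I * t * (Real.log m - Real.log n))
          * Real.exp (-(c * t)^2)).re)) :
    0 < (∑' m : ℕ, ∑' n : ℕ, ∫ t : ℝ,
        (q m * q n : ℝ) * Complex.exp (Complex.I * t * (Real.log m - Real.log n))
          * Real.exp (-(c * t)^2)).re ∧
    ∑' k : ℕ, a k * q k
      ≤ (∑' k : ℕ, a k * (∑' m : ℕ, ∑' n : ℕ, ∫ t : ℝ,
            Complex.exp (-(Complex.I * t) * Real.log k)
              * (q m * q n : ℝ) * Complex.exp (Complex.I * t * (Real.log m - Real.log n))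
              * Real.exp (-(c * t)^2)).re)
        / (∑' m : ℕ, ∑' n : ℕ, ∫ t : ℝ,
            (q m * q n : ℝ) * Complex.exp (Complex.I * t * (Real.log m - Real.log n))
              * Real.exp (-(c * t)^2)).re := by
  simp_rw [← Complex.ofReal_sub, integral_ofReal_mul_exp_mul_gaussian hc.ne',
    integral_exp_neg_mul_ofReal_mul_exp_mul_gaussian hc.ne', re_tsum_tsum_ofReal] at hI1 ⊢
  have hI₂ : ∑' m : ℕ, ∑' n : ℕ, q m * q n * gaussianFourier c (log m - log n)
      = resonanceSum q (gaussianFourier c) 0 := by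
    simp_rw [resonanceSum, sub_zero]
  have hpos : 0 < resonanceSum q (gaussianFourier c) 0 :=
    resonanceSum_zero_pos hq hq1 hsum (gaussianFourier_nonneg c) (gaussianFourier_le c)
      (gaussianFourier_pos hc.ne' 0)
  rw [hI₂]
  refine ⟨hpos, (le_div_iff₀ hpos).2 ?_⟩
  rw [← tsum_mul_right]
  refine (haq.mul_right _).tsum_le_tsum (fun k => ?_) hI1
  rw [mul_assoc]
  exact mul_le_mul_of_nonneg_left (mul_resonanceSum_zero_le hq hq0 hmul hsum
    (gaussianFourier_nonneg c) (gaussianFourier_le c) k) (ha k)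

/-- Let `q` be nonnegative completely multiplicative summable weights (with `q 1 = 1`)
and `a` nonnegative coefficients with `∑ a_k q_k < ∞`, `Φ(t) = e^{−t²}`, `c > 0`. With
`I₁ = ∑_k a_k ∑_{m,n} ∫ k^{−it} q_m q_n (m/n)^{it} Φ(ct) dt` and
`I₂ = ∑_{m,n} ∫ q_m q_n (m/n)^{it} Φ(ct) dt` (all sums absolutely convergent), one has
`I₂ > 0` and `I₁ / I₂ ≥ ∑_{k ≥ 1} a_k q_k`. -/
theorem resonance_ratio_lower_bound (q a : ℕ → ℝ)
    (hq : ∀ n, 0 ≤ q n) (hq0 : q 0 = 0) (hq1 : q 1 = 1)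
    (hmul : ∀ m n : ℕ, q (m * n) = q m * q n) (hsum : Summable q)
    (ha : ∀ k, 0 ≤ a k) (ha0 : a 0 = 0) (haq : Summable (fun k => a k * q k))
    (c : ℝ) (hc : 0 < c)
    (hI1 : Summable (fun k : ℕ => a k * (∑' m : ℕ, ∑' n : ℕ, ∫ t : ℝ,
        Complex.exp (-(Complex.I * t) * Real.log k)
          * (q m * q n : ℝ) * Complex.exp (Complex.I * t * (Real.log m - Real.log n))
          * Real.exp (-(c * t)^2)).re)) :
    0 < (∑' m : ℕ, ∑' n : ℕ, ∫ t : ℝ,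
        (q m * q n : ℝ) * Complex.exp (Complex.I * t * (Real.log m - Real.log n))
          * Real.exp (-(c * t)^2)).re ∧
    ∑' k : ℕ, a k * q k
      ≤ (∑' k : ℕ, a k * (∑' m : ℕ, ∑' n : ℕ, ∫ t : ℝ,
            Complex.exp (-(Complex.I * t) * Real.log k)
              * (q m * q n : ℝ) * Complex.exp (Complex.I * t * (Real.log m - Real.log n))
              * Real.exp (-(c * t)^2)).re)
        / (∑' m : ℕ, ∑' n : ℕ, ∫ t : ℝ,
            (q m * q n : ℝ) * Complex.exp (Complex.I * t * (Real.log m - Real.log n))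
              * Real.exp (-(c * t)^2)).re :=
  resonance_ratio_lower_bound_general q a hq hq0 hq1 hmul hsum ha haq c hc hI1
end
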